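/- Let γ ∈ (0, 1/2), K ≥ 0, M ≥ 0, T > 0, and let b : ℝ → ℝ be twice differentiable with |b′(x)| ≤ K(1+|x|)^{−γ} and |b″(x)| ≤ M for all x. Set c₁ = K/(1−γ), c₂ = K|b(0)| + M/2, c₃ = K²/(1−γ), and β′(x) = b(x)b′(x) + b″(x)/2. Then for every continuous function X : [0,T] → ℝ, writing Ψ = ∫₀^T X(s)² ds + X(T)², one has ∫₀^T |β′(X(s))| ds + |b(X(T))| ≤ |b(0)| + (c₂ + c₃)T + c₃·T^{1/2+γ}·Ψ^{(1−2γ)/2} + c₁·Ψ^{(1−γ)/2}. -/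

import Mathlib

open Real MeasureTheory intervalIntegral

/-!
The product `b b′` grows at most like `|x|^{1-2γ}`: integrating `|b′(u)| ≤ K |u|^{-γ}` gives
`|b x| ≤ |b 0| + c₁ |x|^{1-γ}`, and `(1+|x|)^{-γ} ≤ |x|^{-γ}` takes off a further power `γ`. Hence
`|β′ x| ≤ c₂ + c₃ (x²)^{(1-2γ)/2}`, and as `t ↦ t^{(1-2γ)/2}` is concave, Jensen's inequality bounds
`∫₀^T (X s²)^{(1-2γ)/2} ds` by `T^{1/2+γ} (∫₀^T X s² ds)^{(1-2γ)/2}`. The terminal term only needs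
the growth bound on `b` and `X(T)² ≤ Ψ`.
-/

open Set

lemma Real.abs_rpow_eq_sq_rpow_half (x r : ℝ) : |x| ^ r = (x ^ 2) ^ (r / 2) := by
  rw [← sq_abs, ← Real.rpow_natCast, ← Real.rpow_mul (abs_nonneg x)]
  ring_nf

lemma Real.rpow_mul_one_add_rpow_neg_le {t a γ : ℝ} (ht : 0 ≤ t) (ha : a ≠ 0) (hγ : 0 ≤ γ) :
    t ^ a * (1 + t) ^ (-γ) ≤ t ^ (a - γ) := by
  rcases ht.eq_or_lt with rfl | ht
  · rw [Real.zero_rpow ha, zero_mul]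
    exact Real.rpow_nonneg le_rfl _
  · calc t ^ a * (1 + t) ^ (-γ) ≤ t ^ a * t ^ (-γ) :=
          mul_le_mul_of_nonneg_left (Real.rpow_le_rpow_of_nonpos ht (by linarith) (by linarith))
            (Real.rpow_nonneg ht.le a)
      _ = t ^ (a - γ) := by rw [← Real.rpow_add ht, sub_eq_add_neg]

lemma abs_sub_le_of_abs_deriv_le_rpow {f : ℝ → ℝ} {K γ a : ℝ} (hγ : γ < 1)
    (hf : Differentiable ℝ f) (hf' : ∀ x, 0 < x → |deriv f x| ≤ K * x ^ (-γ)) (ha : 0 ≤ a) :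
    |f a - f 0| ≤ K / (1 - γ) * a ^ (1 - γ) := by
  have hdom : IntervalIntegrable (fun u => K * u ^ (-γ)) volume 0 a :=
    (intervalIntegrable_rpow' (by linarith)).const_mul K
  have hint : IntervalIntegrable (deriv f) volume 0 a := by
    refine hdom.mono_fun' (measurable_deriv f).aestronglyMeasurable ?_
    rw [uIoc_of_le ha]
    exact (ae_restrict_mem measurableSet_Ioc).mono fun u hu => hf' u hu.1
  calc |f a - f 0| = |∫ u in (0 : ℝ)..a, deriv f u| := by
        rw [integral_deriv_eq_sub (fun x _ => hf x) hint]
    _ ≤ ∫ u in (0 : ℝ)..a, |deriv f u| := abs_integral_le_integral_abs ha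
    _ ≤ ∫ u in (0 : ℝ)..a, K * u ^ (-γ) :=
        integral_mono_on_of_le_Ioo ha hint.abs hdom fun u hu => hf' u hu.1
    _ = K / (1 - γ) * a ^ (1 - γ) := by
        rw [intervalIntegral.integral_const_mul, integral_rpow (Or.inl (by linarith)),
          Real.zero_rpow (by linarith), neg_add_eq_sub, sub_zero]
        ring

lemma abs_sub_le_of_abs_deriv_le_abs_rpow {f : ℝ → ℝ} {K γ : ℝ} (hγ : γ < 1)
    (hf : Differentiable ℝ f) (hf' : ∀ x ≠ 0, |deriv f x| ≤ K * |x| ^ (-γ)) (x : ℝ) :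
    |f x - f 0| ≤ K / (1 - γ) * |x| ^ (1 - γ) := by
  rcases le_total 0 x with hx | hx
  · rw [abs_of_nonneg hx]
    exact abs_sub_le_of_abs_deriv_le_rpow hγ hf
      (fun u hu => by simpa [abs_of_pos hu] using hf' u hu.ne') hx
  · have := abs_sub_le_of_abs_deriv_le_rpow (f := fun u => f (-u)) hγ
      (hf.comp differentiable_neg)
      (fun u hu => by simpa [deriv_comp_neg, abs_of_pos hu] using hf' (-u) (by linarith))
      (neg_nonneg.2 hx)
    simpa [abs_of_nonpos hx] using this

section GrowthOfDrift

variable {b : ℝ → ℝ} {K γ : ℝ}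

lemma nonneg_of_abs_deriv_le_one_add_rpow (hbd : ∀ x, |deriv b x| ≤ K * (1 + |x|) ^ (-γ)) :
    0 ≤ K := by
  simpa using (abs_nonneg _).trans (hbd 0)

lemma abs_le_of_abs_deriv_le_one_add_rpow (hγ₀ : 0 ≤ γ) (hγ₁ : γ < 1) (hb : Differentiable ℝ b)
    (hbd : ∀ x, |deriv b x| ≤ K * (1 + |x|) ^ (-γ)) (x : ℝ) :
    |b x| ≤ |b 0| + K / (1 - γ) * |x| ^ (1 - γ) := by
  have hK := nonneg_of_abs_deriv_le_one_add_rpow hbd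
  have hbd' : ∀ x ≠ 0, |deriv b x| ≤ K * |x| ^ (-γ) := fun x hx =>
    (hbd x).trans <| mul_le_mul_of_nonneg_left
      (Real.rpow_le_rpow_of_nonpos (abs_pos.2 hx) (by linarith) (by linarith)) hK
  have := abs_sub_le_of_abs_deriv_le_abs_rpow hγ₁ hb hbd' x
  calc |b x| ≤ |b 0| + |b x - b 0| := by simpa using abs_add_le (b 0) (b x - b 0)
    _ ≤ _ := by linarith

lemma abs_mul_deriv_le_of_abs_deriv_le_one_add_rpow (hγ₀ : 0 ≤ γ) (hγ₁ : γ < 1)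
    (hb : Differentiable ℝ b) (hbd : ∀ x, |deriv b x| ≤ K * (1 + |x|) ^ (-γ)) (x : ℝ) :
    |b x * deriv b x| ≤ K * |b 0| + K ^ 2 / (1 - γ) * |x| ^ (1 - 2 * γ) := by
  have hK := nonneg_of_abs_deriv_le_one_add_rpow hbd
  have hdecay : (1 + |x|) ^ (-γ) ≤ 1 :=
    Real.rpow_le_one_of_one_le_of_nonpos (by simp) (by linarith)
  have hgain : |x| ^ (1 - γ) * (1 + |x|) ^ (-γ) ≤ |x| ^ (1 - 2 * γ) := by
    simpa [sub_sub, ← two_mul] using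
      Real.rpow_mul_one_add_rpow_neg_le (abs_nonneg x) (by linarith : 1 - γ ≠ 0) hγ₀
  calc |b x * deriv b x|
      ≤ (|b 0| + K / (1 - γ) * |x| ^ (1 - γ)) * (K * (1 + |x|) ^ (-γ)) := by
        rw [abs_mul]
        exact mul_le_mul (abs_le_of_abs_deriv_le_one_add_rpow hγ₀ hγ₁ hb hbd x) (hbd x)
          (abs_nonneg _) (by positivity)
    _ = K * (|b 0| * (1 + |x|) ^ (-γ)) + K ^ 2 / (1 - γ) * (|x| ^ (1 - γ) * (1 + |x|) ^ (-γ)) := by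
        ring
    _ ≤ K * |b 0| + K ^ 2 / (1 - γ) * |x| ^ (1 - 2 * γ) := by
        gcongr
        exact mul_le_of_le_one_right (abs_nonneg _) hdecay

lemma abs_mul_deriv_add_deriv_deriv_div_two_le {M : ℝ} (hγ₀ : 0 ≤ γ) (hγ₁ : γ < 1)
    (hb : Differentiable ℝ b) (hbd : ∀ x, |deriv b x| ≤ K * (1 + |x|) ^ (-γ))
    (hbd2 : ∀ x, |deriv (deriv b) x| ≤ M) (x : ℝ) :
    |b x * deriv b x + deriv (deriv b) x / 2| ≤
      K * |b 0| + M / 2 + K ^ 2 / (1 - γ) * |x| ^ (1 - 2 * γ) := by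
  have hbb' := abs_mul_deriv_le_of_abs_deriv_le_one_add_rpow hγ₀ hγ₁ hb hbd x
  have hb'' : |deriv (deriv b) x / 2| ≤ M / 2 := by
    rw [abs_div, abs_two]
    linarith [hbd2 x]
  linarith [abs_add_le (b x * deriv b x) (deriv (deriv b) x / 2)]

end GrowthOfDrift

theorem integral_rpow_le_measureReal_univ_rpow_mul {α : Type*} [MeasurableSpace α]
    {μ : Measure α} [IsFiniteMeasure μ] [NeZero μ] {f : α → ℝ} {p : ℝ} (hp₀ : 0 ≤ p) (hp₁ : p ≤ 1)
    (hf₀ : 0 ≤ᵐ[μ] f) (hf : Integrable f μ) (hfp : Integrable (fun x => f x ^ p) μ) :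
    ∫ x, f x ^ p ∂μ ≤ μ.real univ ^ (1 - p) * (∫ x, f x ∂μ) ^ p := by
  have hm : 0 < μ.real univ := measureReal_univ_pos
  have hjensen := (Real.concaveOn_rpow hp₀ hp₁).le_map_average
    (continuousOn_id.rpow_const fun _ _ => Or.inr hp₀) isClosed_Ici hf₀ hf hfp
  rw [average_eq, average_eq, smul_eq_mul, smul_eq_mul,
    Real.mul_rpow (inv_nonneg.2 hm.le) (integral_nonneg_of_ae hf₀), Real.inv_rpow hm.le] at hjensen
  calc ∫ x, f x ^ p ∂μ = μ.real univ * ((μ.real univ)⁻¹ * ∫ x, f x ^ p ∂μ) := by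
        field_simp
    _ ≤ μ.real univ * ((μ.real univ ^ p)⁻¹ * (∫ x, f x ∂μ) ^ p) := by gcongr
    _ = μ.real univ ^ (1 - p) * (∫ x, f x ∂μ) ^ p := by
        rw [Real.rpow_sub hm, Real.rpow_one]
        ring

theorem intervalIntegral.integral_rpow_le_sub_rpow_mul {g : ℝ → ℝ} {a b p : ℝ} (hab : a < b)
    (hp₀ : 0 ≤ p) (hp₁ : p ≤ 1) (hg : ContinuousOn g (Icc a b)) (hg₀ : ∀ x ∈ Icc a b, 0 ≤ g x) :
    ∫ x in a..b, g x ^ p ≤ (b - a) ^ (1 - p) * (∫ x in a..b, g x) ^ p := by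
  have : NeZero (volume.restrict (Ioc a b)) := ⟨by simp [hab]⟩
  have hgp : ContinuousOn (fun x => g x ^ p) (Icc a b) := hg.rpow_const fun _ _ => Or.inr hp₀
  simpa [integral_of_le hab.le, Measure.real, hab.le] using
    integral_rpow_le_measureReal_univ_rpow_mul (μ := volume.restrict (Ioc a b)) hp₀ hp₁
      (ae_restrict_of_forall_mem measurableSet_Ioc fun x hx => hg₀ x (Ioc_subset_Icc_self hx))
      (hg.integrableOn_Icc.mono_set Ioc_subset_Icc_self)
      (hgp.integrableOn_Icc.mono_set Ioc_subset_Icc_self)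

theorem intervalIntegral.integral_le_mul_sub_add_mul_integral {f g : ℝ → ℝ} {a b A B : ℝ}
    (hab : a ≤ b) (hf : 0 ≤ f) (hg : IntervalIntegrable g volume a b)
    (hfg : ∀ x, f x ≤ A + B * g x) :
    ∫ x in a..b, f x ≤ A * (b - a) + B * ∫ x in a..b, g x := by
  have hAg : IntervalIntegrable (fun x => A + B * g x) volume a b :=
    intervalIntegrable_const.add (hg.const_mul B)
  calc ∫ x in a..b, f x ≤ ∫ x in a..b, (A + B * g x) := by
        simp only [integral_of_le hab]
        exact MeasureTheory.integral_mono_of_nonneg (.of_forall hf) hAg.1 (.of_forall hfg)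
    _ = A * (b - a) + B * ∫ x in a..b, g x := by
        rw [integral_add intervalIntegrable_const (hg.const_mul B),
          intervalIntegral.integral_const_mul, intervalIntegral.integral_const, smul_eq_mul,
          mul_comm]

theorem girsanov_drift_abs_bound_general (γ K M T : ℝ)
    (hγ₀ : 0 < γ) (hγ₁ : γ < 1 / 2) (hT : 0 < T)
    (b : ℝ → ℝ) (hb : Differentiable ℝ b)
    (hbd : ∀ x : ℝ, |deriv b x| ≤ K * (1 + |x|) ^ (-γ))
    (hbd2 : ∀ x : ℝ, |deriv (deriv b) x| ≤ M)
    (c₁ c₂ c₃ : ℝ) (hc₁ : c₁ = K / (1 - γ)) (hc₂ : c₂ = K * |b 0| + M / 2)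
    (hc₃ : c₃ = K ^ 2 / (1 - γ))
    (β' : ℝ → ℝ) (hβ' : ∀ x : ℝ, β' x = b x * deriv b x + deriv (deriv b) x / 2)
    (X : ℝ → ℝ) (hX : ContinuousOn X (Set.Icc 0 T))
    (Ψ : ℝ) (hΨ : Ψ = (∫ s in (0:ℝ)..T, (X s) ^ 2) + (X T) ^ 2) :
    (∫ s in (0:ℝ)..T, |β' (X s)|) + |b (X T)| ≤
      |b 0| + (c₂ + c₃) * T + c₃ * T ^ (1 / 2 + γ) * Ψ ^ ((1 - 2 * γ) / 2) +
        c₁ * Ψ ^ ((1 - γ) / 2) := by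
  set p := (1 - 2 * γ) / 2 with hp
  have hp₀ : 0 ≤ p := by linarith
  have hc₃₀ : 0 ≤ c₃ := hc₃ ▸ div_nonneg (sq_nonneg K) (by linarith)
  have hX₂ : ContinuousOn (fun s => X s ^ 2) (Icc 0 T) := hX.pow 2
  have hX₂p : IntervalIntegrable (fun s => (X s ^ 2) ^ p) volume 0 T :=
    (hX₂.rpow_const fun _ _ => Or.inr hp₀).intervalIntegrable_of_Icc hT.le
  have hI₀ : 0 ≤ ∫ s in (0:ℝ)..T, X s ^ 2 := integral_nonneg hT.le fun s _ => sq_nonneg (X s)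
  have hdrift : ∫ s in (0:ℝ)..T, |β' (X s)| ≤ c₂ * T + c₃ * ∫ s in (0:ℝ)..T, (X s ^ 2) ^ p := by
    simpa only [sub_zero] using
      integral_le_mul_sub_add_mul_integral hT.le (fun _ => abs_nonneg _) hX₂p fun s => by
        rw [hβ', hp, ← Real.abs_rpow_eq_sq_rpow_half, hc₂, hc₃]
        exact abs_mul_deriv_add_deriv_deriv_div_two_le hγ₀.le (by linarith) hb hbd hbd2 _
  have hjensen : ∫ s in (0:ℝ)..T, (X s ^ 2) ^ p ≤ T ^ (1 / 2 + γ) * Ψ ^ p :=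
    calc ∫ s in (0:ℝ)..T, (X s ^ 2) ^ p ≤ T ^ (1 / 2 + γ) * (∫ s in (0:ℝ)..T, X s ^ 2) ^ p := by
          simpa [p, show 1 - (1 - 2 * γ) / 2 = 1 / 2 + γ by ring] using
            integral_rpow_le_sub_rpow_mul hT hp₀ (by linarith) hX₂ fun s _ => sq_nonneg (X s)
      _ ≤ T ^ (1 / 2 + γ) * Ψ ^ p := by
          gcongr
          linarith [sq_nonneg (X T)]
  have hterminal : |b (X T)| ≤ |b 0| + c₁ * Ψ ^ ((1 - γ) / 2) := by
    have hgrowth := abs_le_of_abs_deriv_le_one_add_rpow hγ₀.le (by linarith) hb hbd (X T)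
    rw [← hc₁, Real.abs_rpow_eq_sq_rpow_half] at hgrowth
    have hc₁₀ : 0 ≤ c₁ := hc₁ ▸ div_nonneg (nonneg_of_abs_deriv_le_one_add_rpow hbd) (by linarith)
    have hXT : (X T ^ 2) ^ ((1 - γ) / 2) ≤ Ψ ^ ((1 - γ) / 2) :=
      Real.rpow_le_rpow (sq_nonneg _) (by linarith) (by linarith)
    linarith [mul_le_mul_of_nonneg_left hXT hc₁₀]
  linarith [mul_le_mul_of_nonneg_left hjensen hc₃₀, mul_nonneg hc₃₀ hT.le]

/-- **Linear pathwise bound on the Girsanov drift terms.**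
For `γ ∈ (0, 1/2)`, `b` twice differentiable with `|b′| ≤ K(1+|x|)^{−γ}`, `|b″| ≤ M`,
`c₁ = K/(1−γ)`, `c₂ = K|b(0)| + M/2`, `c₃ = K²/(1−γ)`, `β′ = b b′ + b″/2`, and any
continuous `X : [0,T] → ℝ`, with `Ψ = ∫₀^T X(s)² ds + X(T)²`:
`∫₀^T |β′(X s)| ds + |b(X T)| ≤ |b(0)| + (c₂+c₃)T + c₃ T^{1/2+γ} Ψ^{(1−2γ)/2} + c₁ Ψ^{(1−γ)/2}`. -/
theorem girsanov_drift_abs_bound (γ K M T : ℝ)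
    (hγ₀ : 0 < γ) (hγ₁ : γ < 1 / 2) (hK : 0 ≤ K) (hM : 0 ≤ M) (hT : 0 < T)
    (b : ℝ → ℝ) (hb : Differentiable ℝ b) (hb' : Differentiable ℝ (deriv b))
    (hbd : ∀ x : ℝ, |deriv b x| ≤ K * (1 + |x|) ^ (-γ))
    (hbd2 : ∀ x : ℝ, |deriv (deriv b) x| ≤ M)
    (c₁ c₂ c₃ : ℝ) (hc₁ : c₁ = K / (1 - γ)) (hc₂ : c₂ = K * |b 0| + M / 2)
    (hc₃ : c₃ = K ^ 2 / (1 - γ))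
    (β' : ℝ → ℝ) (hβ' : ∀ x : ℝ, β' x = b x * deriv b x + deriv (deriv b) x / 2)
    (X : ℝ → ℝ) (hX : ContinuousOn X (Set.Icc 0 T))
    (Ψ : ℝ) (hΨ : Ψ = (∫ s in (0:ℝ)..T, (X s) ^ 2) + (X T) ^ 2) :
    (∫ s in (0:ℝ)..T, |β' (X s)|) + |b (X T)| ≤
      |b 0| + (c₂ + c₃) * T + c₃ * T ^ (1 / 2 + γ) * Ψ ^ ((1 - 2 * γ) / 2) +
        c₁ * Ψ ^ ((1 - γ) / 2) :=
  girsanov_drift_abs_bound_general γ K M T hγ₀ hγ₁ hT b hb hbd hbd2 c₁ c₂ c₃ hc₁ hc₂ hc₃ β' hβ' X hX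
    Ψ hΨ
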